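/- arXiv:2303.16159 — 2 statements merged into one kernel-verified Lean document; each statement's English description precedes it below -/
import Mathlib

section
/- Structure of the set K: For every λ ∈ (0,1), the set K = {λS + (1−λ)R : R, S ∈ SO(2), Re₁·Se₁ ≥ 0} equals {αQ : √(λ² + (1−λ)²) ≤ α ≤ 1, Q ∈ SO(2)}; in particular every element of K is a conformal contraction, i.e. K ⊂ {F ∈ ℝ^{2×2} : |Fe₁| ≤ 1, Fe₂ = (Fe₁)^⊥}. Moreover, for all R, S ∈ SO(2) one has det(λS + (1−λ)R) = (λ² + (1−λ)²) + 2λ(1−λ)·Se₁·Re₁; in particular det(λS+(1−λ)R) ≥ λ² + (1−λ)² whenever Se₁·Re₁ ≥ 0. -/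
open MeasureTheory Filter Topology Set Metric
open scoped ENNReal Classical

noncomputable section

abbrev V2 := EuclideanSpace ℝ (Fin 2)
abbrev Mat2 := Matrix (Fin 2) (Fin 2) ℝ

/-- standard basis vector of `ℝ²` -/
def stdVec (j : Fin 2) : V2 := EuclideanSpace.single j (1 : ℝ)

/-- build a vector of `ℝ²` from coordinates -/
def vec2 (a b : ℝ) : V2 := (WithLp.equiv 2 (Fin 2 → ℝ)).symm ![a, b]

/-- matrix-vector multiplication `A x` -/
def mulVec2 (A : Mat2) (x : V2) : V2 :=
  (WithLp.equiv 2 (Fin 2 → ℝ)).symm (fun i => A i 0 * x 0 + A i 1 * x 1)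

/-- Frobenius norm of a `2×2` matrix -/
def frob (A : Mat2) : ℝ := Real.sqrt (∑ i, ∑ j, (A i j) ^ 2)

/-- the rotation group `SO(2)` -/
def SO2 : Set Mat2 := {A | A * A.transpose = 1 ∧ A.det = 1}

/-- Frobenius distance to `SO(2)` -/
def distSO2 (A : Mat2) : ℝ := sInf {d : ℝ | ∃ R ∈ SO2, d = frob (A - R)}

/-- the scalar product `Re₁ · Se₁` of the first columns -/
def colDot (R S : Mat2) : ℝ := R 0 0 * S 0 0 + R 1 0 * S 1 0

/-- the scalar product `Se₁ · Re₂` -/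
def dotSR (S R : Mat2) : ℝ := S 0 0 * R 0 1 + S 1 0 * R 1 1

/-- the set `K = {λS + (1-λ)R : R,S ∈ SO(2), Re₁·Se₁ ≥ 0}` -/
def Kset (lam : ℝ) : Set Mat2 :=
  {F | ∃ S ∈ SO2, ∃ R ∈ SO2, 0 ≤ colDot R S ∧ F = lam • S + (1 - lam) • R}

/-- the gradient of `u : ℝ² → ℝ²` as a matrix field (defined where `u` is differentiable) -/
def grad (u : V2 → V2) (x : V2) : Mat2 :=
  Matrix.of fun i j => (fderiv ℝ u x (stdVec j)) i

/-- `A^⊥ = (Ae₂ | -Ae₁)` -/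
def matPerp (A : Mat2) : Mat2 := Matrix.of fun i j => if j = 0 then A i 1 else -(A i 0)

/-- the matrix `(Ae₁ | Be₂)` with first column `Ae₁` and second column `Be₂` -/
def mixCols (A B : Mat2) : Mat2 := Matrix.of fun i j => if j = 0 then A i 0 else B i 1

/-- real exponent as an extended nonneg real -/
def pE (p : ℝ) : ℝ≥0∞ := ENNReal.ofReal p

/-- conjugate exponent -/
def conjExp (p : ℝ) : ℝ := p / (p - 1)

/-- `L^p` norm of a vector field on a set -/
def lpNormV (p : ℝ) (A : Set V2) (f : V2 → V2) : ℝ := (∫ x in A, ‖f x‖ ^ p) ^ (1 / p)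

/-- `L^p` norm of a matrix field on a set (Frobenius norm pointwise) -/
def lpNormM (p : ℝ) (A : Set V2) (G : V2 → Mat2) : ℝ := (∫ x in A, frob (G x) ^ p) ^ (1 / p)

/-- `W^{1,p}` norm on a set -/
def w1pNorm (p : ℝ) (A : Set V2) (u : V2 → V2) : ℝ :=
  (∫ x in A, (‖u x‖ ^ p + frob (grad u x) ^ p)) ^ (1 / p)

/-- membership in the Sobolev space `W^{1,p}(A;ℝ²)`, with gradient realized a.e. by `grad` -/
def MemW1p (p : ℝ) (A : Set V2) (u : V2 → V2) : Prop :=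
  MemLp u (pE p) (volume.restrict A) ∧
  (∀ᵐ x ∂(volume.restrict A), DifferentiableAt ℝ u x) ∧
  Integrable (fun x => frob (grad u x) ^ p) (volume.restrict A)

/-- strong convergence in `L^p(A;ℝ²)` -/
def StrongLpConv (p : ℝ) (A : Set V2) (u : ℕ → V2 → V2) (u0 : V2 → V2) : Prop :=
  Tendsto (fun n => ∫ x in A, ‖u n x - u0 x‖ ^ p) atTop (𝓝 0)

/-- weak convergence in `W^{1,p}(A;ℝ²)`: componentwise testing of the functions and
their gradients against `L^{p'}` functions -/
def WeakConvW1p (p : ℝ) (A : Set V2) (u : ℕ → V2 → V2) (u0 : V2 → V2) : Prop :=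
  (∀ g : V2 → ℝ, MemLp g (pE (conjExp p)) (volume.restrict A) →
    ∀ i : Fin 2, Tendsto (fun n => ∫ x in A, u n x i * g x) atTop
      (𝓝 (∫ x in A, u0 x i * g x))) ∧
  (∀ g : V2 → ℝ, MemLp g (pE (conjExp p)) (volume.restrict A) →
    ∀ i j : Fin 2, Tendsto (fun n => ∫ x in A, grad (u n) x i j * g x) atTop
      (𝓝 (∫ x in A, grad u0 x i j * g x)))

/-- fractional part valued in `(0,1]` -/
def fract' (t : ℝ) : ℝ := if Int.fract t = 0 then 1 else Int.fract t

/-- the `Y`-periodic stiff set `Y₁ ∪ Y₃` (with `Y₁ = (0,λ]²`, `Y₃ = (λ,1]²`) -/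
def YstiffPer (lam : ℝ) : Set V2 :=
  {x | (fract' (x 0) ≤ lam ∧ fract' (x 1) ≤ lam) ∨ (lam < fract' (x 0) ∧ lam < fract' (x 1))}

/-- the `Y`-periodic soft set `Y₂ ∪ Y₄` -/
def YsoftPer (lam : ℝ) : Set V2 := (YstiffPer lam)ᶜ

/-- the set `ε Y_stiff` (periodically extended) -/
def scaledStiff (lam ε : ℝ) : Set V2 := {x | ε⁻¹ • x ∈ YstiffPer lam}

/-- the unit cell `Y = (0,1]²` -/
def Ycell : Set V2 := {x | x 0 ∈ Ioc (0 : ℝ) 1 ∧ x 1 ∈ Ioc (0 : ℝ) 1}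

/-- the Ciarlet–Nečas non-interpenetration condition on a set -/
def CiarletNecas (A : Set V2) (u : V2 → V2) : Prop :=
  (∫ x in A, |(grad u x).det|) ≤ (volume (u '' A)).toReal

/-- the class `𝒜` of admissible deformations -/
def Admissible (p : ℝ) (Ω : Set V2) (u : V2 → V2) : Prop :=
  MemW1p p Ω u ∧ (∀ᵐ x ∂(volume.restrict Ω), 0 < (grad u x).det) ∧ CiarletNecas Ω u

/-- vanishing mean value on `Ω` -/
def ZeroMean (Ω : Set V2) (u : V2 → V2) : Prop := (∫ x in Ω, u x) = 0

/-- bounded Lipschitz domain in the plane: open, bounded, connected, and near every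
boundary point, after a rigid change of coordinates, `Ω` is the subgraph of a Lipschitz
function -/
def IsLipschitzDomain (Ω : Set V2) : Prop :=
  IsOpen Ω ∧ Bornology.IsBounded Ω ∧ IsConnected Ω ∧
  ∀ x ∈ frontier Ω, ∃ r > (0 : ℝ), ∃ e : V2 ≃ᵢ V2, ∃ L : NNReal, ∃ f : ℝ → ℝ,
    LipschitzWith L f ∧ ∀ y ∈ ball x r, (y ∈ Ω ↔ (e y) 1 < f ((e y) 0))

/-- `u` is affine with gradient `F` -/
def IsAffineMap2 (u : V2 → V2) (F : Mat2) : Prop := ∃ b : V2, ∀ x, u x = mulVec2 F x + b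

/-- continuous piecewise affine map on `Ω` (finitely many gradients) -/
def PiecewiseAffineOn (Ω : Set V2) (v : V2 → V2) : Prop :=
  ContinuousOn v Ω ∧ ∃ G : Finset Mat2,
    ∀ᵐ x ∂(volume.restrict Ω), DifferentiableAt ℝ v x ∧ grad v x ∈ (G : Set Mat2)

/-- the open unit ball of `ℝ²` -/
def unitBall2 : Set V2 := ball (0 : V2) 1

/-- the quasiconvex envelope of an extended-real valued density -/
def qcEnv (W : Mat2 → ℝ≥0∞) (F : Mat2) : ℝ≥0∞ :=
  ⨅ (φ : V2 → V2) (_ : ∃ L : NNReal, LipschitzWith L φ)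
    (_ : ∀ x ∈ frontier unitBall2, φ x = 0),
    (volume unitBall2)⁻¹ * ∫⁻ x in unitBall2, W (F + grad φ x)

/-- polyconvexity of an extended-real valued density -/
def PolyconvexE (W : Mat2 → ℝ≥0∞) : Prop :=
  ∃ g : Mat2 × ℝ → ℝ≥0∞, LowerSemicontinuous g ∧
    (∀ (a b : ℝ), 0 ≤ a → 0 ≤ b → a + b = 1 → ∀ x y : Mat2 × ℝ,
      g (a • x.1 + b • y.1, a * x.2 + b * y.2) ≤
        ENNReal.ofReal a * g x + ENNReal.ofReal b * g y) ∧
    (∀ F : Mat2, W F = g (F, F.det))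

/-- the standard `p`-growth and coercivity conditions on the soft density -/
def WsoftGrowth (p : ℝ) (Wsoft : Mat2 → ℝ≥0∞) : Prop :=
  Continuous Wsoft ∧
  ∃ c : ℝ, 0 < c ∧ ∃ θ : ℝ → ℝ,
    ConvexOn ℝ (Ioi (0 : ℝ)) θ ∧ (∀ t : ℝ, 0 < t → 0 ≤ θ t) ∧
    (∀ s t : ℝ, 0 < s → 0 < t → θ (s * t) ≤ c * (1 + θ s) * (1 + θ t)) ∧
    (∀ F : Mat2, 0 < F.det →
      ENNReal.ofReal ((1 / c) * frob F ^ p + (1 / c) * θ F.det - c) ≤ Wsoft F ∧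
      Wsoft F ≤ ENNReal.ofReal (c * frob F ^ p + c * θ F.det + c)) ∧
    (∀ F : Mat2, F.det ≤ 0 → Wsoft F = ⊤)

/-- conditions on the stiff density with diverging elastic constants at rate `ε^{-β}` -/
def WstiffCond (p β c ε : ℝ) (Wstiff : Mat2 → ℝ≥0∞) : Prop :=
  Continuous Wstiff ∧ (∀ R ∈ SO2, Wstiff R = 0) ∧
  (∀ F : Mat2, 0 < F.det →
    ENNReal.ofReal ((1 / (c * ε ^ β)) * distSO2 F ^ p) ≤ Wstiff F) ∧
  (∀ F : Mat2, F.det ≤ 0 → Wstiff F = ⊤)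

/-- the fully rigid density -/
def Wrig : Mat2 → ℝ≥0∞ := fun F => if F ∈ SO2 then 0 else ⊤

/-- the heterogeneous elastic energy at scale `ε` -/
def energy (lam ε p : ℝ) (Wsoft Wstiff : Mat2 → ℝ≥0∞) (Ω : Set V2) (u : V2 → V2) : ℝ≥0∞ :=
  if Admissible p Ω u ∧ ZeroMean Ω u then
    ∫⁻ x in Ω, (if x ∈ scaledStiff lam ε then Wstiff (grad u x) else Wsoft (grad u x))
  else ⊤

/-- the homogenized density `W_hom` (here `(1/2)|Y_soft| = λ(1-λ)`) -/
def Whom (lam : ℝ) (Wsoft : Mat2 → ℝ≥0∞) (F : Mat2) : ℝ≥0∞ :=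
  ENNReal.ofReal (lam * (1 - lam)) *
    ⨅ (S : Mat2) (R : Mat2) (_ : S ∈ SO2) (_ : R ∈ SO2)
      (_ : 0 ≤ colDot R S) (_ : lam • S + (1 - lam) • R = F),
      (qcEnv Wsoft (mixCols S R) + qcEnv Wsoft (mixCols R S))

/-- the homogenized (limit) energy functional -/
def Ihom (lam : ℝ) (Wsoft : Mat2 → ℝ≥0∞) (Ω : Set V2) (u : V2 → V2) : ℝ≥0∞ :=
  if ZeroMean Ω u then
    ⨅ (F : Mat2) (_ : F ∈ Kset lam) (_ : IsAffineMap2 u F), volume Ω * Whom lam Wsoft F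
  else ⊤



/-- rotation matrix from cosine/sine -/
lemma rot_mem_SO2' {c s : ℝ} (h : c^2 + s^2 = 1) : !![c, -s; s, c] ∈ SO2 := by
  constructor
  · ext i j
    fin_cases i <;> fin_cases j <;>
      simp [Matrix.mul_apply, Fin.sum_univ_two, Matrix.one_apply, Matrix.transpose] <;>
      nlinarith
  · simp [Matrix.det_fin_two]
    nlinarith

lemma so2_entries' {A : Mat2} (hA : A ∈ SO2) :
    A 1 1 = A 0 0 ∧ A 0 1 = -(A 1 0) ∧ (A 0 0)^2 + (A 1 0)^2 = 1 := by
  obtain ⟨h1, h2⟩ := hA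
  have e00 := congrFun (congrFun h1 0) 0
  have e01 := congrFun (congrFun h1 0) 1
  have e11 := congrFun (congrFun h1 1) 1
  simp [Matrix.mul_apply, Matrix.transpose_apply, Fin.sum_univ_two, Matrix.one_apply] at e00 e01 e11
  rw [Matrix.det_fin_two] at h2
  have hd : A 1 1 = A 0 0 := by
    linear_combination A 0 0 * h2 + A 0 1 * e01 - A 1 1 * e00
  have hb : A 0 1 = -(A 1 0) := by
    linear_combination A 0 0 * e01 - A 1 0 * e00 - A 0 1 * h2
  exact ⟨hd, hb, by linear_combination e00 + (A 1 0 - A 0 1) * hb⟩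

lemma exists_cs' (m n α : ℝ) (hm : 0 < m) (hn : 0 < n) (hmn : m + n = 1)
    (h1 : Real.sqrt (m^2+n^2) ≤ α) (h2 : α ≤ 1) :
    ∃ c s c' s' : ℝ, c^2+s^2 = 1 ∧ c'^2+s'^2 = 1 ∧ 0 ≤ c*c' + s*s' ∧
      m*c + n*c' = α ∧ m*s + n*s' = 0 := by
  have hsq : Real.sqrt (m^2+n^2) ^ 2 = m^2+n^2 := Real.sq_sqrt (by positivity)
  have hαpos : 0 < α :=
    lt_of_lt_of_le (Real.sqrt_pos.2 (by positivity)) h1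
  have hα2 : m^2 + n^2 ≤ α^2 := by
    nlinarith [Real.sqrt_nonneg (m^2+n^2)]
  have h3 : m - n ≤ α := by nlinarith
  have h4 : n - m ≤ α := by nlinarith
  set c : ℝ := (α^2 + m^2 - n^2)/(2*m*α) with hc_def
  set c' : ℝ := (α^2 + n^2 - m^2)/(2*n*α) with hc'_def
  have hc2 : c^2 ≤ 1 := by
    rw [hc_def, div_pow, div_le_one (by positivity)]
    nlinarith [mul_nonneg (mul_nonneg (mul_nonneg (show (0:ℝ) ≤ m + α - n by linarith)
      (show (0:ℝ) ≤ n + α - m by linarith)) (show (0:ℝ) ≤ m + n - α by linarith))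
      (show (0:ℝ) ≤ m + n + α by linarith)]
  set s : ℝ := Real.sqrt (1 - c^2) with hs_def
  have hs2 : s^2 = 1 - c^2 := Real.sq_sqrt (by linarith)
  refine ⟨c, s, c', -(m/n)*s, by linarith, ?_, ?_, ?_, ?_⟩
  · have : (-(m/n)*s)^2 = (m^2/n^2) * (1 - c^2) := by rw [mul_pow, hs2]; ring
    rw [this, hc_def, hc'_def]
    field_simp
    ring
  · have key : c*c' + s*(-(m/n)*s) = (α^2-m^2-n^2)/(2*m*n) := by
      have : s*(-(m/n)*s) = -(m/n)*(1-c^2) := by rw [← hs2]; ring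
      rw [this, hc_def, hc'_def]
      field_simp
      ring
    rw [key]
    apply div_nonneg (by linarith) (by positivity)
  · rw [hc_def, hc'_def]; field_simp; ring
  · field_simp; ring

/-- **Structure of the set `K`** (Remark 2.4): `K` consists exactly of the conformal
contractions `αQ` with `√|Y_stiff| ≤ α ≤ 1`, and the determinant formula for
`λS + (1-λ)R` holds. -/
theorem Kset_structure (lam : ℝ) (hlam : lam ∈ Ioo (0 : ℝ) 1) :
    (Kset lam = {F : Mat2 | ∃ α : ℝ, ∃ Q ∈ SO2,
        Real.sqrt (lam ^ 2 + (1 - lam) ^ 2) ≤ α ∧ α ≤ 1 ∧ F = α • Q}) ∧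
    (Kset lam ⊆ {F : Mat2 |
        Real.sqrt ((F 0 0) ^ 2 + (F 1 0) ^ 2) ≤ 1 ∧ F 0 1 = -(F 1 0) ∧ F 1 1 = F 0 0}) ∧
    (∀ R S : Mat2, R ∈ SO2 → S ∈ SO2 →
      (lam • S + (1 - lam) • R).det
        = (lam ^ 2 + (1 - lam) ^ 2) + 2 * lam * (1 - lam) * colDot R S) ∧
    (∀ R S : Mat2, R ∈ SO2 → S ∈ SO2 → 0 ≤ colDot R S →
      lam ^ 2 + (1 - lam) ^ 2 ≤ (lam • S + (1 - lam) • R).det) := by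
  obtain ⟨hm, hl1⟩ := hlam
  have hn : 0 < 1 - lam := by linarith
  -- determinant formula
  have detf : ∀ R S : Mat2, R ∈ SO2 → S ∈ SO2 →
      (lam • S + (1 - lam) • R).det
        = (lam ^ 2 + (1 - lam) ^ 2) + 2 * lam * (1 - lam) * colDot R S := by
    intro R S hR hS
    obtain ⟨hS1, hS2, hS3⟩ := so2_entries' hS
    obtain ⟨hR1, hR2, hR3⟩ := so2_entries' hR
    rw [Matrix.det_fin_two]
    simp only [Matrix.add_apply, Matrix.smul_apply, smul_eq_mul, colDot]
    rw [hS1, hS2, hR1, hR2]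
    linear_combination (lam^2) * hS3 + ((1-lam)^2) * hR3
  -- forward inclusion data
  have fwd : ∀ F ∈ Kset lam, ∃ α : ℝ, ∃ Q ∈ SO2,
      Real.sqrt (lam ^ 2 + (1 - lam) ^ 2) ≤ α ∧ α ≤ 1 ∧ F = α • Q := by
    intro F hF
    obtain ⟨S, hS, R, hR, hdot, hFeq⟩ := hF
    obtain ⟨hS1, hS2, hS3⟩ := so2_entries' hS
    obtain ⟨hR1, hR2, hR3⟩ := so2_entries' hR
    obtain ⟨p, hp_def⟩ : ∃ p : ℝ, p = lam * S 0 0 + (1 - lam) * R 0 0 := ⟨_, rfl⟩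
    obtain ⟨q, hq_def⟩ : ∃ q : ℝ, q = lam * S 1 0 + (1 - lam) * R 1 0 := ⟨_, rfl⟩
    have hpq : p^2 + q^2 = lam^2 + (1-lam)^2 + 2*lam*(1-lam) * colDot R S := by
      simp only [colDot]
      rw [hp_def, hq_def]
      linear_combination (lam^2) * hS3 + ((1-lam)^2) * hR3
    have hdle : colDot R S ≤ 1 := by
      simp only [colDot]
      nlinarith [sq_nonneg (S 0 0 - R 0 0), sq_nonneg (S 1 0 - R 1 0)]
    have hmn' : (0:ℝ) < lam * (1 - lam) := by nlinarith
    have hpq1 : p^2 + q^2 ≤ 1 := by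
      nlinarith [mul_nonneg hmn'.le (sub_nonneg.2 hdle)]
    have hpq2 : lam^2 + (1-lam)^2 ≤ p^2 + q^2 := by
      nlinarith [mul_nonneg hmn'.le hdot]
    have hpqpos : 0 < p^2 + q^2 := by nlinarith
    obtain ⟨α, hα_def⟩ : ∃ α : ℝ, α = Real.sqrt (p^2 + q^2) := ⟨_, rfl⟩
    have hαsq : α^2 = p^2 + q^2 := by rw [hα_def]; exact Real.sq_sqrt (by positivity)
    have hαpos : 0 < α := by rw [hα_def]; exact Real.sqrt_pos.2 hpqpos
    obtain ⟨u, hu_def⟩ : ∃ u : ℝ, u = p / α := ⟨_, rfl⟩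
    obtain ⟨v, hv_def⟩ : ∃ v : ℝ, v = q / α := ⟨_, rfl⟩
    have huv : u^2 + v^2 = 1 := by
      rw [hu_def, hv_def]
      field_simp
      linarith [hαsq]
    have hau : α * u = p := by rw [hu_def]; field_simp
    have hav : α * v = q := by rw [hv_def]; field_simp
    refine ⟨α, !![u, -v; v, u], rot_mem_SO2' huv, ?_, ?_, ?_⟩
    · rw [hα_def]; exact Real.sqrt_le_sqrt hpq2
    · rw [hα_def]
      calc Real.sqrt (p^2+q^2) ≤ Real.sqrt 1 := Real.sqrt_le_sqrt hpq1
        _ = 1 := Real.sqrt_one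
    · rw [hFeq]
      ext i j
      fin_cases i <;> fin_cases j <;>
        simp only [Fin.mk_zero, Fin.mk_one, Matrix.add_apply, Matrix.smul_apply, smul_eq_mul,
          Matrix.cons_val', Matrix.cons_val_zero, Matrix.cons_val_one, Matrix.head_cons,
          Matrix.head_fin_const, Matrix.empty_val', Matrix.cons_val_fin_one, Matrix.of_apply]
      · linear_combination -hau - hp_def
      · rw [hS2, hR2]
        linear_combination hav + hq_def
      · linear_combination -hav - hq_def
      · rw [hS1, hR1]
        linear_combination -hau - hp_def
  refine ⟨?_, ?_, detf, ?_⟩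
  · ext F
    constructor
    · exact fun hF => fwd F hF
    · rintro ⟨α, Q, hQ, hα1, hα2, rfl⟩
      obtain ⟨hQ1, hQ2, hQ3⟩ := so2_entries' hQ
      obtain ⟨c, s, c', s', hc, hc', hdot, hsum, hzero⟩ :=
        exists_cs' lam (1 - lam) α hm hn (by ring) hα1 hα2
      refine ⟨!![Q 0 0 * c - Q 1 0 * s, -(Q 1 0 * c + Q 0 0 * s);
                 Q 1 0 * c + Q 0 0 * s, Q 0 0 * c - Q 1 0 * s],
              rot_mem_SO2' (by linear_combination (c^2+s^2) * hQ3 + hc),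
              !![Q 0 0 * c' - Q 1 0 * s', -(Q 1 0 * c' + Q 0 0 * s');
                 Q 1 0 * c' + Q 0 0 * s', Q 0 0 * c' - Q 1 0 * s'],
              rot_mem_SO2' (by linear_combination (c'^2+s'^2) * hQ3 + hc'), ?_, ?_⟩
      · have hcd : colDot !![Q 0 0 * c' - Q 1 0 * s', -(Q 1 0 * c' + Q 0 0 * s');
                 Q 1 0 * c' + Q 0 0 * s', Q 0 0 * c' - Q 1 0 * s']
            !![Q 0 0 * c - Q 1 0 * s, -(Q 1 0 * c + Q 0 0 * s);
                 Q 1 0 * c + Q 0 0 * s, Q 0 0 * c - Q 1 0 * s] = c*c' + s*s' := by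
          simp [colDot]
          linear_combination (c*c' + s*s') * hQ3
        rw [hcd]
        exact hdot
      · ext i j
        fin_cases i <;> fin_cases j <;>
          simp only [Fin.mk_zero, Fin.mk_one, Matrix.add_apply, Matrix.smul_apply, smul_eq_mul,
            Matrix.cons_val', Matrix.cons_val_zero, Matrix.cons_val_one, Matrix.head_cons,
            Matrix.head_fin_const, Matrix.empty_val', Matrix.cons_val_fin_one, Matrix.of_apply]
        · linear_combination -(Q 0 0) * hsum + Q 1 0 * hzero
        · rw [hQ2]
          linear_combination Q 1 0 * hsum + Q 0 0 * hzero
        · linear_combination -(Q 1 0) * hsum - Q 0 0 * hzero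
        · rw [hQ1]
          linear_combination -(Q 0 0) * hsum + Q 1 0 * hzero
  · intro F hF
    obtain ⟨α, Q, hQ, hα1, hα2, rfl⟩ := fwd F hF
    obtain ⟨hQ1, hQ2, hQ3⟩ := so2_entries' hQ
    have hαpos : 0 < α :=
      lt_of_lt_of_le (Real.sqrt_pos.2 (by positivity)) hα1
    refine ⟨?_, ?_, ?_⟩
    · simp only [Matrix.smul_apply, smul_eq_mul]
      have h5 : (α * Q 0 0)^2 + (α * Q 1 0)^2 = α^2 := by
        linear_combination α^2 * hQ3
      rw [h5, Real.sqrt_sq hαpos.le]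
      exact hα2
    · simp only [Matrix.smul_apply, smul_eq_mul]
      rw [hQ2]; ring
    · simp only [Matrix.smul_apply, smul_eq_mul]
      rw [hQ1]
  · intro R S hR hS hdot
    rw [detf R S hR hS]
    nlinarith [mul_nonneg (mul_nonneg hm.le hn.le) hdot]

end
end

section
/- Representation of elements of K: Let λ ∈ (0,1) and let F ∈ K with F ≠ 0, so F = λS + (1−λ)R for some R, S ∈ SO(2) with Re₁·Se₁ ≥ 0. Then necessarily Se₁ = (1/(2λ|Fe₁|²))·[(|Fe₁|² + 2λ − 1)·Fe₁ ± √(4λ²|Fe₁|² − (|Fe₁|² + 2λ − 1)²)·Fe₂] and Re₁ = (1/(1−λ))·(Fe₁ − λ·Se₁). If |Fe₁| < 1 there exist exactly two pairs (R,S) ∈ SO(2)×SO(2) with Re₁·Se₁ ≥ 0 and F = λS + (1−λ)R, and if |Fe₁| = 1 the representation is unique. For λ = 1/2 the formula reduces to Se₁ = Fe₁ ± (√(1−|Fe₁|²)/|Fe₁|)·Fe₂ and Re₁ = Fe₁ ∓ (√(1−|Fe₁|²)/|Fe₁|)·Fe₂. -/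
open MeasureTheory Filter Topology Set Metric
open scoped ENNReal Classical

noncomputable section

def rot2 (c d : ℝ) : Mat2 := !![c, -d; d, c]

lemma rot2_mem_SO2 {c d : ℝ} (h : c^2 + d^2 = 1) : rot2 c d ∈ SO2 := by
  have ht : (rot2 c d).transpose = !![c, d; -d, c] := by
    ext i j; fin_cases i <;> fin_cases j <;> simp [rot2]
  constructor
  · rw [ht]
    ext i j
    fin_cases i <;> fin_cases j <;>
      simp [rot2, Matrix.mul_apply, Fin.sum_univ_two, Matrix.one_apply] <;>
      linarith [h]
  · simp [rot2, Matrix.det_fin_two_of]; linear_combination h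

lemma so2_struct {A : Mat2} (h : A ∈ SO2) :
    A = rot2 (A 0 0) (A 1 0) ∧ (A 0 0)^2 + (A 1 0)^2 = 1 := by
  obtain ⟨h1, h2⟩ := h
  have e00 := congrFun (congrFun h1 0) 0
  have e01 := congrFun (congrFun h1 0) 1
  simp [Matrix.mul_apply, Matrix.transpose_apply, Fin.sum_univ_two, Matrix.one_apply] at e00 e01
  rw [Matrix.det_fin_two] at h2
  have hd : A 1 1 = A 0 0 := by
    linear_combination (-(A 1 1)) * e00 + A 0 1 * e01 + A 0 0 * h2
  have hc : A 0 1 = -(A 1 0) := by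
    linear_combination A 0 0 * e01 - A 0 1 * h2 - A 1 0 * e00
  refine ⟨?_, ?_⟩
  · ext i j; fin_cases i <;> fin_cases j <;> simp [rot2, hd, hc]
  · linear_combination e00 + (A 1 0 - A 0 1) * hc

noncomputable def pairRS (lam : ℝ) (F : Mat2) (w : ℝ) : Mat2 × Mat2 :=
  (rot2 ((F 0 0 - lam * (((F 0 0 ^ 2 + F 1 0 ^ 2 + 2 * lam - 1) / (2 * lam) * F 0 0 - w * F 1 0) / (F 0 0 ^ 2 + F 1 0 ^ 2))) / (1 - lam))
        ((F 1 0 - lam * (((F 0 0 ^ 2 + F 1 0 ^ 2 + 2 * lam - 1) / (2 * lam) * F 1 0 + w * F 0 0) / (F 0 0 ^ 2 + F 1 0 ^ 2))) / (1 - lam)),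
   rot2 (((F 0 0 ^ 2 + F 1 0 ^ 2 + 2 * lam - 1) / (2 * lam) * F 0 0 - w * F 1 0) / (F 0 0 ^ 2 + F 1 0 ^ 2))
        (((F 0 0 ^ 2 + F 1 0 ^ 2 + 2 * lam - 1) / (2 * lam) * F 1 0 + w * F 0 0) / (F 0 0 ^ 2 + F 1 0 ^ 2)))

lemma rep_iff (lam : ℝ) (hl0 : 0 < lam) (hl1 : lam < 1) (F : Mat2)
    (hF01 : F 0 1 = -(F 1 0)) (hF11 : F 1 1 = F 0 0)
    (hge : lam ^ 2 + (1 - lam) ^ 2 ≤ F 0 0 ^ 2 + F 1 0 ^ 2)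
    (q : Mat2 × Mat2) :
    (q.1 ∈ SO2 ∧ q.2 ∈ SO2 ∧ 0 ≤ colDot q.1 q.2 ∧ F = lam • q.2 + (1 - lam) • q.1) ↔
    ∃ w : ℝ, w ^ 2 = (F 0 0 ^ 2 + F 1 0 ^ 2) - ((F 0 0 ^ 2 + F 1 0 ^ 2 + 2 * lam - 1) / (2 * lam)) ^ 2 ∧
      q = pairRS lam F w := by
  have hm2pos : 0 < F 0 0 ^ 2 + F 1 0 ^ 2 := by nlinarith
  have h2l : (2 * lam) ≠ 0 := by positivity
  have h1l : (1 : ℝ) - lam ≠ 0 := by linarith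
  obtain ⟨Q1, Q2⟩ := q
  constructor
  · rintro ⟨hq1, hq2, hdot, hrep⟩
    simp only at hq1 hq2 hdot hrep ⊢
    obtain ⟨hQ1, hab⟩ := so2_struct hq1
    obtain ⟨hQ2, hcd⟩ := so2_struct hq2
    have hE00 : F 0 0 = lam * Q2 0 0 + (1 - lam) * Q1 0 0 := by
      rw [hrep]; simp [Matrix.add_apply, Matrix.smul_apply]
    have hE10 : F 1 0 = lam * Q2 1 0 + (1 - lam) * Q1 1 0 := by
      rw [hrep]; simp [Matrix.add_apply, Matrix.smul_apply]
    have hmu : F 0 0 * Q2 0 0 + F 1 0 * Q2 1 0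
        = (F 0 0 ^ 2 + F 1 0 ^ 2 + 2 * lam - 1) / (2 * lam) := by
      rw [eq_div_iff h2l, hE00, hE10]
      linear_combination lam ^ 2 * hcd - (1 - lam) ^ 2 * hab
    refine ⟨-(F 1 0) * Q2 0 0 + F 0 0 * Q2 1 0, ?_, ?_⟩
    · rw [← hmu]
      linear_combination (F 0 0 ^ 2 + F 1 0 ^ 2) * hcd
    · have hc : Q2 0 0 = ((F 0 0 ^ 2 + F 1 0 ^ 2 + 2 * lam - 1) / (2 * lam) * F 0 0
          - (-(F 1 0) * Q2 0 0 + F 0 0 * Q2 1 0) * F 1 0) / (F 0 0 ^ 2 + F 1 0 ^ 2) := by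
        rw [← hmu, eq_div_iff hm2pos.ne']; ring
      have hd : Q2 1 0 = ((F 0 0 ^ 2 + F 1 0 ^ 2 + 2 * lam - 1) / (2 * lam) * F 1 0
          + (-(F 1 0) * Q2 0 0 + F 0 0 * Q2 1 0) * F 0 0) / (F 0 0 ^ 2 + F 1 0 ^ 2) := by
        rw [← hmu, eq_div_iff hm2pos.ne']; ring
      have ha : Q1 0 0 = (F 0 0 - lam * Q2 0 0) / (1 - lam) := by
        rw [eq_div_iff h1l]; linear_combination -hE00
      have hb : Q1 1 0 = (F 1 0 - lam * Q2 1 0) / (1 - lam) := by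
        rw [eq_div_iff h1l]; linear_combination -hE10
      have hgoal : pairRS lam F (-(F 1 0) * Q2 0 0 + F 0 0 * Q2 1 0)
          = (rot2 ((F 0 0 - lam * Q2 0 0) / (1 - lam)) ((F 1 0 - lam * Q2 1 0) / (1 - lam)),
             rot2 (Q2 0 0) (Q2 1 0)) := by
        unfold pairRS
        rw [← hc, ← hd]
      rw [hgoal]
      refine Prod.ext ?_ ?_
      · simp only; rw [← ha, ← hb]; exact hQ1
      · simp only; exact hQ2
  · rintro ⟨w, hw, hq⟩
    rw [hq]
    set m2 := F 0 0 ^ 2 + F 1 0 ^ 2 with hm2def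
    set μ := (m2 + 2 * lam - 1) / (2 * lam) with hmudef
    set c' := (μ * F 0 0 - w * F 1 0) / m2 with hcdef
    set d' := (μ * F 1 0 + w * F 0 0) / m2 with hddef
    set a' := (F 0 0 - lam * c') / (1 - lam) with hadef
    set b' := (F 1 0 - lam * d') / (1 - lam) with hbdef
    have hpq : pairRS lam F w = (rot2 a' b', rot2 c' d') := rfl
    clear_value a' b' c' d' μ m2
    have hm2ne : m2 ≠ 0 := hm2pos.ne'
    have hmu2 : 2 * lam * μ = m2 + 2 * lam - 1 := by
      rw [hmudef]; field_simp
    have hw' : (2 * lam) ^ 2 * w ^ 2 = (2 * lam) ^ 2 * m2 - (m2 + 2 * lam - 1) ^ 2 := by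
      linear_combination (2 * lam) ^ 2 * hw - (2 * lam * μ + (m2 + 2 * lam - 1)) * hmu2
    have hcd1 : c' ^ 2 + d' ^ 2 = 1 := by
      rw [hcdef, hddef]
      field_simp
      linear_combination (-(μ ^ 2 + w ^ 2)) * hm2def + m2 * hw
    have hdotc : F 0 0 * c' + F 1 0 * d' = μ := by
      rw [hcdef, hddef]
      field_simp
      linear_combination (-μ) * hm2def
    have hab1 : a' ^ 2 + b' ^ 2 = 1 := by
      rw [hadef, hbdef]
      field_simp
      linear_combination (-1 : ℝ) * hm2def - 2 * lam * hdotc + lam ^ 2 * hcd1 - hmu2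
    rw [hpq]
    refine ⟨rot2_mem_SO2 hab1, rot2_mem_SO2 hcd1, ?_, ?_⟩
    · have hcd0 : colDot (rot2 a' b') (rot2 c' d') = a' * c' + b' * d' := by
        simp [colDot, rot2]
      have hcol : a' * c' + b' * d' = (μ - lam) / (1 - lam) := by
        rw [hadef, hbdef]
        field_simp
        linear_combination hdotc - lam * hcd1
      show 0 ≤ colDot (rot2 a' b') (rot2 c' d')
      rw [hcd0, hcol]
      apply div_nonneg ?_ (by linarith)
      nlinarith [hmu2, hge]
    · show F = lam • rot2 c' d' + (1 - lam) • rot2 a' b'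
      have ha2 : (1 - lam) * a' = F 0 0 - lam * c' := by rw [hadef]; field_simp
      have hb2 : (1 - lam) * b' = F 1 0 - lam * d' := by rw [hbdef]; field_simp
      ext i j
      fin_cases i <;> fin_cases j <;>
        simp only [rot2, Matrix.add_apply, Matrix.smul_apply, smul_eq_mul,
          Fin.mk_zero, Fin.mk_one, Fin.isValue,
          Matrix.cons_val', Matrix.cons_val_zero, Matrix.cons_val_one, Matrix.head_cons,
          Matrix.head_fin_const, Matrix.empty_val', Matrix.cons_val_fin_one,
          Matrix.of_apply]
      · linear_combination (-1 : ℝ) * ha2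
      · rw [hF01]; linear_combination hb2
      · linear_combination (-1 : ℝ) * hb2
      · rw [hF11]; linear_combination (-1 : ℝ) * ha2


set_option maxHeartbeats 2000000 in
/-- **Representation of elements of `K`** (Remark 2.7 a)). -/
theorem Kset_representation (lam : ℝ) (hlam : lam ∈ Ioo (0 : ℝ) 1)
    (F : Mat2) (hF0 : F ≠ 0)
    (R S : Mat2) (hR : R ∈ SO2) (hS : S ∈ SO2) (hdot : 0 ≤ colDot R S)
    (hrep : F = lam • S + (1 - lam) • R) :
    -- the explicit formula for `Se₁` (with one of the two signs) and for `Re₁`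
    (∃ s : ℝ, (s = 1 ∨ s = -1) ∧
      (∀ i : Fin 2, S i 0 = (1 / (2 * lam * Real.sqrt ((F 0 0) ^ 2 + (F 1 0) ^ 2) ^ 2)) *
        (((Real.sqrt ((F 0 0) ^ 2 + (F 1 0) ^ 2)) ^ 2 + 2 * lam - 1) * F i 0 +
          s * Real.sqrt (4 * lam ^ 2 * (Real.sqrt ((F 0 0) ^ 2 + (F 1 0) ^ 2)) ^ 2 -
            ((Real.sqrt ((F 0 0) ^ 2 + (F 1 0) ^ 2)) ^ 2 + 2 * lam - 1) ^ 2) * F i 1)) ∧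
      (∀ i : Fin 2, R i 0 = (1 / (1 - lam)) * (F i 0 - lam * S i 0))) ∧
    -- exactly two representations if `|Fe₁| < 1`
    (Real.sqrt ((F 0 0) ^ 2 + (F 1 0) ^ 2) < 1 →
      ∃ q₁ q₂ : Mat2 × Mat2, q₁ ≠ q₂ ∧
        {q : Mat2 × Mat2 | q.1 ∈ SO2 ∧ q.2 ∈ SO2 ∧ 0 ≤ colDot q.1 q.2 ∧
          F = lam • q.2 + (1 - lam) • q.1} = {q₁, q₂}) ∧
    -- a unique representation if `|Fe₁| = 1`
    (Real.sqrt ((F 0 0) ^ 2 + (F 1 0) ^ 2) = 1 →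
      ∃ q₁ : Mat2 × Mat2,
        {q : Mat2 × Mat2 | q.1 ∈ SO2 ∧ q.2 ∈ SO2 ∧ 0 ≤ colDot q.1 q.2 ∧
          F = lam • q.2 + (1 - lam) • q.1} = {q₁}) ∧
    -- reduction for `λ = 1/2`
    (lam = 1 / 2 → ∃ s : ℝ, (s = 1 ∨ s = -1) ∧
      (∀ i : Fin 2,
        S i 0 = F i 0 + s * (Real.sqrt (1 - (Real.sqrt ((F 0 0) ^ 2 + (F 1 0) ^ 2)) ^ 2) /
          Real.sqrt ((F 0 0) ^ 2 + (F 1 0) ^ 2)) * F i 1 ∧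
        R i 0 = F i 0 - s * (Real.sqrt (1 - (Real.sqrt ((F 0 0) ^ 2 + (F 1 0) ^ 2)) ^ 2) /
          Real.sqrt ((F 0 0) ^ 2 + (F 1 0) ^ 2)) * F i 1)) := by
  obtain ⟨hl0, hl1⟩ := hlam
  have h2l : (2 * lam) ≠ 0 := by positivity
  have h1l : (1 : ℝ) - lam ≠ 0 := by intro h; rw [sub_eq_zero] at h; exact absurd h.symm (ne_of_lt hl1)
  obtain ⟨hRrot, hab⟩ := so2_struct hR
  obtain ⟨hSrot, hcd⟩ := so2_struct hS
  have hS01 : S 0 1 = -(S 1 0) := by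
    conv_lhs => rw [hSrot]
    simp [rot2]
  have hS11 : S 1 1 = S 0 0 := by
    conv_lhs => rw [hSrot]
    simp [rot2]
  have hR01 : R 0 1 = -(R 1 0) := by
    conv_lhs => rw [hRrot]
    simp [rot2]
  have hR11 : R 1 1 = R 0 0 := by
    conv_lhs => rw [hRrot]
    simp [rot2]
  have hE : ∀ i j : Fin 2, F i j = lam * S i j + (1 - lam) * R i j := by
    intro i j; rw [hrep]; simp [Matrix.add_apply, Matrix.smul_apply]
  have hF01 : F 0 1 = -(F 1 0) := by rw [hE 0 1, hE 1 0, hS01, hR01]; try ring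
  have hF11 : F 1 1 = F 0 0 := by rw [hE 1 1, hE 0 0, hS11, hR11]; try ring
  have hdot' : 0 ≤ R 0 0 * S 0 0 + R 1 0 * S 1 0 := hdot
  have hge : lam ^ 2 + (1 - lam) ^ 2 ≤ F 0 0 ^ 2 + F 1 0 ^ 2 := by
    rw [hE 0 0, hE 1 0]
    nlinarith [hab, hcd, mul_nonneg (mul_nonneg (le_of_lt hl0)
      (show (0:ℝ) ≤ 1 - lam by linarith)) hdot']
  have hm2pos : 0 < F 0 0 ^ 2 + F 1 0 ^ 2 := lt_of_lt_of_le (by nlinarith) hge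
  have hnn : (0:ℝ) ≤ F 0 0 ^ 2 + F 1 0 ^ 2 := le_of_lt hm2pos
  obtain ⟨w, hw, hq⟩ := (rep_iff lam hl0 hl1 F hF01 hF11 hge (R, S)).mp ⟨hR, hS, hdot, hrep⟩
  have hQS : S = rot2 (((F 0 0 ^ 2 + F 1 0 ^ 2 + 2 * lam - 1) / (2 * lam) * F 0 0 - w * F 1 0)
        / (F 0 0 ^ 2 + F 1 0 ^ 2))
      (((F 0 0 ^ 2 + F 1 0 ^ 2 + 2 * lam - 1) / (2 * lam) * F 1 0 + w * F 0 0)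
        / (F 0 0 ^ 2 + F 1 0 ^ 2)) := congrArg Prod.snd hq
  have hSc : S 0 0 = ((F 0 0 ^ 2 + F 1 0 ^ 2 + 2 * lam - 1) / (2 * lam) * F 0 0 - w * F 1 0)
      / (F 0 0 ^ 2 + F 1 0 ^ 2) := by rw [hQS]; simp [rot2]
  have hSd : S 1 0 = ((F 0 0 ^ 2 + F 1 0 ^ 2 + 2 * lam - 1) / (2 * lam) * F 1 0 + w * F 0 0)
      / (F 0 0 ^ 2 + F 1 0 ^ 2) := by rw [hQS]; simp [rot2]
  have hmu2 : 2 * lam * ((F 0 0 ^ 2 + F 1 0 ^ 2 + 2 * lam - 1) / (2 * lam))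
      = F 0 0 ^ 2 + F 1 0 ^ 2 + 2 * lam - 1 := by field_simp
  have hw' : (2 * lam) ^ 2 * w ^ 2 = (2 * lam) ^ 2 * (F 0 0 ^ 2 + F 1 0 ^ 2)
      - (F 0 0 ^ 2 + F 1 0 ^ 2 + 2 * lam - 1) ^ 2 := by
    linear_combination (2 * lam) ^ 2 * hw
      - (2 * lam * ((F 0 0 ^ 2 + F 1 0 ^ 2 + 2 * lam - 1) / (2 * lam))
        + (F 0 0 ^ 2 + F 1 0 ^ 2 + 2 * lam - 1)) * hmu2
  simp only [Real.sq_sqrt hnn]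
  refine ⟨?_, ?_, ?_, ?_⟩
  · -- Part 1 : formulas
    have hDeq : 4 * lam ^ 2 * (F 0 0 ^ 2 + F 1 0 ^ 2)
        - (F 0 0 ^ 2 + F 1 0 ^ 2 + 2 * lam - 1) ^ 2 = (2 * lam * w) ^ 2 := by
      linear_combination (-1 : ℝ) * hw'
    have hsqrtD : Real.sqrt (4 * lam ^ 2 * (F 0 0 ^ 2 + F 1 0 ^ 2)
        - (F 0 0 ^ 2 + F 1 0 ^ 2 + 2 * lam - 1) ^ 2) = 2 * lam * |w| := by
      rw [hDeq, Real.sqrt_sq_eq_abs, abs_mul, abs_of_pos (show (0:ℝ) < 2 * lam by linarith)]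
    obtain ⟨s, hs, hsw⟩ : ∃ s : ℝ, (s = 1 ∨ s = -1) ∧ s * |w| = w := by
      rcases le_or_gt 0 w with h | h
      · exact ⟨1, Or.inl rfl, by simp [abs_of_nonneg h]⟩
      · exact ⟨-1, Or.inr rfl, by simp [abs_of_neg h]⟩
    have hred : s * Real.sqrt (4 * lam ^ 2 * (F 0 0 ^ 2 + F 1 0 ^ 2)
        - (F 0 0 ^ 2 + F 1 0 ^ 2 + 2 * lam - 1) ^ 2) = 2 * lam * w := by
      rw [hsqrtD]; linear_combination 2 * lam * hsw
    refine ⟨s, hs, ?_, ?_⟩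
    · intro i
      simp only [hred]
      fin_cases i
      · simp only [Fin.zero_eta, Fin.mk_one, Fin.isValue]
        rw [hSc, hF01]
        field_simp; ring
      · simp only [Fin.zero_eta, Fin.mk_one, Fin.isValue]
        rw [hSd, hF11]
        field_simp
    · intro i
      have h := hE i 0
      field_simp
      linear_combination (-1 : ℝ) * h
  · -- Part 2 : two representations
    intro hlt
    clear hq hQS hSc hSd hrep hE hRrot hSrot hab hcd hS01 hS11 hR01 hR11 hdot' hdot hR hS hF0 hw hw' hmu2
    have hm2lt : F 0 0 ^ 2 + F 1 0 ^ 2 < 1 := by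
      nlinarith [Real.sq_sqrt hnn, Real.sqrt_nonneg (F 0 0 ^ 2 + F 1 0 ^ 2)]
    set K := (F 0 0 ^ 2 + F 1 0 ^ 2)
      - ((F 0 0 ^ 2 + F 1 0 ^ 2 + 2 * lam - 1) / (2 * lam)) ^ 2 with hKdef
    have h4 : (2 * lam) ^ 2 * K
        = ((F 0 0 ^ 2 + F 1 0 ^ 2) - (2 * lam - 1) ^ 2) * (1 - (F 0 0 ^ 2 + F 1 0 ^ 2)) := by
      rw [hKdef]; field_simp; ring
    have hA : 0 < (F 0 0 ^ 2 + F 1 0 ^ 2) - (2 * lam - 1) ^ 2 := by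
      nlinarith [hge, mul_pos hl0 (show (0:ℝ) < 1 - lam by linarith)]
    have hB : 0 < 1 - (F 0 0 ^ 2 + F 1 0 ^ 2) := by linarith
    have hKpos : 0 < K := by
      nlinarith [h4, mul_pos hA hB, sq_nonneg (2 * lam)]
    have hsqK : Real.sqrt K ^ 2 = K := Real.sq_sqrt hKpos.le
    have hsqKpos : 0 < Real.sqrt K := Real.sqrt_pos.mpr hKpos
    refine ⟨pairRS lam F (Real.sqrt K), pairRS lam F (-(Real.sqrt K)), ?_, ?_⟩
    · intro hcontra
      have h1 := congrArg (fun q : Mat2 × Mat2 => q.2 0 0) hcontra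
      have h2 := congrArg (fun q : Mat2 × Mat2 => q.2 1 0) hcontra
      simp only [pairRS, rot2, Matrix.cons_val', Matrix.cons_val_zero, Matrix.cons_val_one,
        Matrix.head_cons, Matrix.empty_val', Matrix.cons_val_fin_one, Matrix.head_fin_const,
        Matrix.of_apply] at h1 h2
      rw [div_eq_div_iff hm2pos.ne' hm2pos.ne'] at h1 h2
      have k1 : Real.sqrt K * (F 1 0 * (F 0 0 ^ 2 + F 1 0 ^ 2)) = 0 := by
        linear_combination (-1/2 : ℝ) * h1
      have k2 : Real.sqrt K * (F 0 0 * (F 0 0 ^ 2 + F 1 0 ^ 2)) = 0 := by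
        linear_combination (1/2 : ℝ) * h2
      have hF10 : F 1 0 = 0 := by
        rcases mul_eq_zero.mp k1 with h | h
        · exact absurd h hsqKpos.ne'
        · rcases mul_eq_zero.mp h with h' | h'
          · exact h'
          · exact absurd h' hm2pos.ne'
      have hF00 : F 0 0 = 0 := by
        rcases mul_eq_zero.mp k2 with h | h
        · exact absurd h hsqKpos.ne'
        · rcases mul_eq_zero.mp h with h' | h'
          · exact h'
          · exact absurd h' hm2pos.ne'
      rw [hF10, hF00] at hm2pos; norm_num at hm2pos
    · ext q
      simp only [Set.mem_setOf_eq, Set.mem_insert_iff, Set.mem_singleton_iff]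
      rw [rep_iff lam hl0 hl1 F hF01 hF11 hge q]
      constructor
      · rintro ⟨w', hw2, rfl⟩
        rw [← hKdef] at hw2
        have hzero : (w' - Real.sqrt K) * (w' + Real.sqrt K) = 0 := by
          linear_combination hw2 - hsqK
        rcases mul_eq_zero.mp hzero with h | h
        · left; rw [show w' = Real.sqrt K by linarith [sub_eq_zero.mp h]]
        · right; rw [show w' = -(Real.sqrt K) by linarith [eq_neg_of_add_eq_zero_left h]]
      · rintro (rfl | rfl)
        · exact ⟨Real.sqrt K, by rw [← hKdef]; exact hsqK, rfl⟩
        · exact ⟨-(Real.sqrt K), by rw [← hKdef, neg_pow]; simpa using hsqK, rfl⟩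
  · -- Part 3 : uniqueness
    intro heq
    clear hq hQS hSc hSd hrep hE hRrot hSrot hab hcd hS01 hS11 hR01 hR11 hdot' hdot hR hS hF0 hw hw' hmu2
    have hm2eq : F 0 0 ^ 2 + F 1 0 ^ 2 = 1 := by
      have h := Real.sq_sqrt hnn; rw [heq] at h; norm_num at h; exact h.symm
    refine ⟨pairRS lam F 0, ?_⟩
    ext q
    simp only [Set.mem_setOf_eq, Set.mem_singleton_iff]
    rw [rep_iff lam hl0 hl1 F hF01 hF11 hge q]
    constructor
    · rintro ⟨w', hw2, rfl⟩
      have hz : w' ^ 2 = 0 := by rw [hw2, hm2eq]; field_simp; ring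
      rw [pow_eq_zero_iff (by norm_num : 2 ≠ 0) |>.mp hz]
    · rintro rfl
      exact ⟨0, by rw [hm2eq]; field_simp; ring, rfl⟩
  · -- Part 4 : lambda = 1/2
    intro hhalf
    subst hhalf
    clear hq hQS hrep hRrot hSrot hab hcd hS01 hS11 hR01 hR11 hdot' hdot hR hS hF0 hw' hmu2
    have hw2 : w ^ 2 = (F 0 0 ^ 2 + F 1 0 ^ 2) - (F 0 0 ^ 2 + F 1 0 ^ 2) ^ 2 := by
      rw [hw]; norm_num
    have hm2le1 : F 0 0 ^ 2 + F 1 0 ^ 2 ≤ 1 := by nlinarith [sq_nonneg w]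
    have habs : Real.sqrt (F 0 0 ^ 2 + F 1 0 ^ 2) * Real.sqrt (1 - (F 0 0 ^ 2 + F 1 0 ^ 2))
        = |w| := by
      rw [← Real.sqrt_mul hnn, ← Real.sqrt_sq_eq_abs]
      congr 1
      linear_combination (-1 : ℝ) * hw2
    obtain ⟨s, hs, hsw⟩ : ∃ s : ℝ, (s = 1 ∨ s = -1) ∧ s * |w| = w := by
      rcases le_or_gt 0 w with h | h
      · exact ⟨1, Or.inl rfl, by simp [abs_of_nonneg h]⟩
      · exact ⟨-1, Or.inr rfl, by simp [abs_of_neg h]⟩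
    have hsqpos : 0 < Real.sqrt (F 0 0 ^ 2 + F 1 0 ^ 2) := Real.sqrt_pos.mpr hm2pos
    have hm2ss : Real.sqrt (F 0 0 ^ 2 + F 1 0 ^ 2) * Real.sqrt (F 0 0 ^ 2 + F 1 0 ^ 2)
        = F 0 0 ^ 2 + F 1 0 ^ 2 := Real.mul_self_sqrt hnn
    have hratio : s * (Real.sqrt (1 - (F 0 0 ^ 2 + F 1 0 ^ 2))
        / Real.sqrt (F 0 0 ^ 2 + F 1 0 ^ 2)) = w / (F 0 0 ^ 2 + F 1 0 ^ 2) := by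
      rw [← mul_div_assoc, div_eq_div_iff hsqpos.ne' hm2pos.ne']
      linear_combination (-(s * Real.sqrt (1 - (F 0 0 ^ 2 + F 1 0 ^ 2)))) * hm2ss
        + (s * Real.sqrt (F 0 0 ^ 2 + F 1 0 ^ 2)) * habs
        + Real.sqrt (F 0 0 ^ 2 + F 1 0 ^ 2) * hsw
    refine ⟨s, hs, ?_⟩
    intro i
    have hR2 : ∀ j : Fin 2, R j 0 = 2 * F j 0 - S j 0 := by
      intro j; linear_combination (-2 : ℝ) * hE j 0
    fin_cases i <;> refine ⟨?_, ?_⟩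
    · simp only [Fin.zero_eta, Fin.mk_one, Fin.isValue]
      rw [hSc, hF01, hratio]
      field_simp; ring
    · simp only [Fin.zero_eta, Fin.mk_one, Fin.isValue]
      rw [hR2 0, hSc, hF01, hratio]
      field_simp; ring
    · simp only [Fin.zero_eta, Fin.mk_one, Fin.isValue]
      rw [hSd, hF11, hratio]
      field_simp; ring
    · simp only [Fin.zero_eta, Fin.mk_one, Fin.isValue]
      rw [hR2 1, hSd, hF11, hratio]
      field_simp; ring


end
end
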